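/- Let A ⊆ ℝ^d, x ∈ A, and 0 < ε ≤ γ. Let M(S, B) denote the B-packing number of S and M_A^loc(ε) = sup_{δ ≥ ε} sup_{y ∈ A} M(A ∩ (y + 2δB₂), δB₂). Then log M(A ∩ (x + 2γB₂), εB₂) ≤ ⌈log₂(2γ/ε)⌉ · log M_A^loc(ε). -/

import Mathlib

open MeasureTheory Metric Set
open scoped ENNReal NNReal

noncomputable section

/-- `packNum A B` is the `B`-packing number of `A`: the largest cardinality of a finite
subset `A₀ ⊆ A` such that `x − y ∉ B` for all distinct `x, y ∈ A₀`. -/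
def packNum {E : Type*} [Sub E] (A B : Set E) : ℕ :=
  sSup {n : ℕ | ∃ s : Finset E, ↑s ⊆ A ∧
    (∀ x ∈ s, ∀ y ∈ s, x ≠ y → x - y ∉ B) ∧ s.card = n}

/-!
A maximal `δ`-packing `T` of `A ∩ B(y, 2δ)` is a `δ`-net of it, and `#T ≤ M := M_A^loc(ε)`
once `δ ≥ ε`. Hence an `ε`-packing of `A ∩ B(y, 2δ)` splits into at most `M` pieces, each an
`ε`-packing of some `A ∩ B(t, δ)` with `t ∈ A`. Halving the radius from `2^k ε` down to `2ε`
gives `M(A ∩ B(y, 2^k ε), εB₂) ≤ M^k`, and `2γ ≤ 2^⌈log₂(2γ/ε)⌉ ε`.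
In finite dimension a `δ`-packing of a ball of radius `2δ` has at most `5^d` points (a volume
argument); this is what makes the packing numbers used here attained and `M_A^loc(ε)` a finite
supremum rather than the junk value `0`.
-/

theorem le_two_pow_natCeil_logb {a : ℝ} (ha : 0 < a) : a ≤ 2 ^ ⌈Real.logb 2 a⌉₊ := by
  rw [← Real.rpow_natCast, ← Real.logb_le_iff_le_rpow one_lt_two ha]
  exact Nat.le_ceil _

namespace Packing

open Module

section Sub

variable {E : Type*} [Sub E] {S B : Set E}

def IsPacking (B : Set E) (s : Finset E) : Prop :=
  ∀ x ∈ s, ∀ y ∈ s, x ≠ y → x - y ∉ B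

theorem IsPacking.subset {s t : Finset E} (ht : IsPacking B t) (hst : s ⊆ t) : IsPacking B s :=
  fun x hx y hy => ht x (hst hx) y (hst hy)

theorem packNum_le {r : ℝ} (hr : 0 ≤ r)
    (h : ∀ s : Finset E, ↑s ⊆ S → IsPacking B s → (s.card : ℝ) ≤ r) :
    (packNum S B : ℝ) ≤ r := by
  have : packNum S B ≤ ⌊r⌋₊ :=
    csSup_le ⟨0, ∅, by simp, by simp, rfl⟩ fun _ ⟨s, hsS, hs, hcard⟩ =>
      hcard ▸ Nat.le_floor (h s hsS hs)
  exact (Nat.cast_le.mpr this).trans (Nat.floor_le hr)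

theorem card_le_packNum {N : ℕ} (h : ∀ s : Finset E, ↑s ⊆ S → IsPacking B s → s.card ≤ N)
    {s : Finset E} (hsS : ↑s ⊆ S) (hs : IsPacking B s) :
    s.card ≤ packNum S B :=
  le_csSup ⟨N, fun _ ⟨t, htS, ht, hcard⟩ => hcard ▸ h t htS ht⟩ ⟨s, hsS, hs, rfl⟩

theorem exists_isPacking_card_eq_packNum {N : ℕ}
    (h : ∀ s : Finset E, ↑s ⊆ S → IsPacking B s → s.card ≤ N) :
    ∃ s : Finset E, ↑s ⊆ S ∧ IsPacking B s ∧ s.card = packNum S B := by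
  refine Nat.sSup_mem (s := {n : ℕ | ∃ s : Finset E, ↑s ⊆ S ∧ IsPacking B s ∧ s.card = n}) ?_ ?_
  · exact ⟨0, ∅, by simp, by simp [IsPacking], rfl⟩
  · exact ⟨N, fun _ ⟨t, htS, ht, hcard⟩ => hcard ▸ h t htS ht⟩

end Sub

section Metric

variable {E : Type*} [SeminormedAddCommGroup E]

theorem isPacking_closedBall_iff {δ : ℝ} {s : Finset E} :
    IsPacking (closedBall 0 δ) s ↔ ∀ x ∈ s, ∀ y ∈ s, x ≠ y → δ < dist x y := by
  simp only [IsPacking, mem_closedBall_zero_iff, dist_eq_norm, not_le]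

theorem exists_isPacking_forall_exists_dist_le {S : Set E} {δ : ℝ} (hδ : 0 ≤ δ) {N : ℕ}
    (h : ∀ s : Finset E, ↑s ⊆ S → IsPacking (closedBall 0 δ) s → s.card ≤ N) :
    ∃ T : Finset E, ↑T ⊆ S ∧ T.card = packNum S (closedBall 0 δ) ∧
      ∀ z ∈ S, ∃ t ∈ T, dist z t ≤ δ := by
  classical
  obtain ⟨T, hTS, hT, hcard⟩ := exists_isPacking_card_eq_packNum h
  refine ⟨T, hTS, hcard, fun z hz => ?_⟩
  by_contra! hfar
  have hzT : z ∉ T := fun hzT => by linarith [hfar z hzT, dist_self z]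
  have hins : IsPacking (closedBall 0 δ) (insert z T) := by
    rw [isPacking_closedBall_iff] at hT ⊢
    intro p hp q hq hpq
    rw [Finset.mem_insert] at hp hq
    rcases hp with rfl | hp <;> rcases hq with rfl | hq
    · exact absurd rfl hpq
    · exact hfar q hq
    · exact dist_comm p q ▸ hfar p hp
    · exact hT p hp q hq hpq
  have := card_le_packNum h (by simpa [Set.insert_subset_iff] using ⟨hz, hTS⟩) hins
  rw [Finset.card_insert_of_notMem hzT, hcard] at this
  omega

theorem card_le_card_mul_of_forall_exists_dist_le {s T : Finset E} {δ N : ℝ}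
    (hcover : ∀ p ∈ s, ∃ t ∈ T, dist p t ≤ δ)
    (hfiber : ∀ t ∈ T, ((s.filter fun p => dist p t ≤ δ).card : ℝ) ≤ N) :
    (s.card : ℝ) ≤ T.card * N := by
  classical
  have hsub : s ⊆ T.biUnion fun t => s.filter fun p => dist p t ≤ δ := fun p hp => by
    obtain ⟨t, ht, hpt⟩ := hcover p hp
    exact Finset.mem_biUnion.mpr ⟨t, ht, Finset.mem_filter.mpr ⟨hp, hpt⟩⟩
  calc (s.card : ℝ)
      ≤ ∑ t ∈ T, ((s.filter fun p => dist p t ≤ δ).card : ℝ) := by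
        exact_mod_cast (Finset.card_le_card hsub).trans Finset.card_biUnion_le
    _ ≤ ∑ _t ∈ T, N := Finset.sum_le_sum hfiber
    _ = T.card * N := by rw [Finset.sum_const, nsmul_eq_mul]

/-- The paper's `M_A^loc(ε)`. -/
def localPackNum (A : Set E) (ε : ℝ) : ℝ :=
  ⨆ δ : {δ : ℝ // ε ≤ δ}, ⨆ y : A,
    (packNum (A ∩ closedBall (y : E) (2 * δ.1)) (closedBall 0 δ.1) : ℝ)

end Metric

section FiniteDimensional

variable {E : Type*} [NormedAddCommGroup E] [NormedSpace ℝ E] [FiniteDimensional ℝ E]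

theorem card_le_of_isPacking_closedBall {δ : ℝ} (hδ : 0 < δ) {S : Set E} {y : E}
    (hS : S ⊆ closedBall y (2 * δ)) (s : Finset E) (hsS : ↑s ⊆ S)
    (hs : IsPacking (closedBall 0 δ) s) : s.card ≤ 5 ^ finrank ℝ E := by
  classical
  have hf : Function.Injective fun p : E => δ⁻¹ • (p - y) := fun p q hpq => by
    simpa [hδ.ne'] using hpq
  rw [← Finset.card_image_of_injective s hf]
  apply Besicovitch.card_le_of_separated
  · simp only [Finset.mem_image]
    rintro _ ⟨p, hp, rfl⟩
    have : dist p y ≤ 2 * δ := hS (hsS hp)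
    rw [norm_smul, norm_inv, Real.norm_of_nonneg hδ.le, ← dist_eq_norm, inv_mul_le_iff₀ hδ]
    linarith
  · simp only [Finset.mem_image]
    rintro _ ⟨p, hp, rfl⟩ _ ⟨q, hq, rfl⟩ hpq
    have : δ < dist p q := isPacking_closedBall_iff.mp hs p hp q hq (fun h => hpq (h ▸ rfl))
    rw [← smul_sub, sub_sub_sub_cancel_right, norm_smul, norm_inv, Real.norm_of_nonneg hδ.le,
      ← dist_eq_norm, le_inv_mul_iff₀ hδ, mul_one]
    exact this.le

theorem packNum_le_localPackNum (A : Set E) {ε δ : ℝ} (hε : 0 < ε) (hδ : ε ≤ δ) {y : E}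
    (hy : y ∈ A) :
    (packNum (A ∩ closedBall y (2 * δ)) (closedBall 0 δ) : ℝ) ≤ localPackNum A ε := by
  have hbound : ∀ δ : ℝ, ε ≤ δ → ∀ y : E,
      (packNum (A ∩ closedBall y (2 * δ)) (closedBall 0 δ) : ℝ) ≤ 5 ^ finrank ℝ E :=
    fun δ hδ y => packNum_le (by positivity) fun s hsS hs => by
      exact_mod_cast card_le_of_isPacking_closedBall (hε.trans_le hδ) inter_subset_right s hsS hs
  refine le_ciSup_of_le ⟨5 ^ finrank ℝ E, ?_⟩ ⟨δ, hδ⟩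
    (le_ciSup_of_le ⟨5 ^ finrank ℝ E, ?_⟩ ⟨y, hy⟩ le_rfl)
  · rintro _ ⟨δ, rfl⟩
    exact Real.iSup_le (fun y => hbound δ.1 δ.2 y) (by positivity)
  · rintro _ ⟨y, rfl⟩
    exact hbound δ hδ y

theorem one_le_localPackNum {A : Set E} {ε : ℝ} (hε : 0 < ε) {x : E} (hx : x ∈ A) :
    1 ≤ localPackNum A ε := by
  have hsingleton : 1 ≤ packNum (A ∩ closedBall x (2 * ε)) (closedBall 0 ε) :=
    card_le_packNum (card_le_of_isPacking_closedBall hε inter_subset_right) (s := {x})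
      (by simpa using ⟨hx, by positivity⟩) (by simp [IsPacking])
  exact (Nat.one_le_cast.mpr hsingleton).trans (packNum_le_localPackNum A hε le_rfl hx)

theorem card_le_pow_of_isPacking {A : Set E} {ε M : ℝ} (hε : 0 < ε)
    (hM : ∀ δ, ε ≤ δ → ∀ y ∈ A, (packNum (A ∩ closedBall y (2 * δ)) (closedBall 0 δ) : ℝ) ≤ M)
    {k : ℕ} (hk : 1 ≤ k) {y : E} (hy : y ∈ A) {s : Finset E}
    (hsS : ↑s ⊆ A ∩ closedBall y (2 ^ k * ε)) (hs : IsPacking (closedBall 0 ε) s) :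
    (s.card : ℝ) ≤ M ^ k := by
  induction k, hk using Nat.le_induction generalizing y s with
  | base =>
    rw [pow_one] at hsS ⊢
    have := card_le_packNum (card_le_of_isPacking_closedBall hε inter_subset_right) hsS hs
    exact (Nat.cast_le.mpr this).trans (hM ε le_rfl y hy)
  | succ k hk ih =>
    set δ := 2 ^ k * ε
    have hδ : ε ≤ δ := le_mul_of_one_le_left hε.le (one_le_pow₀ one_le_two)
    have hδ₀ : 0 < δ := hε.trans_le hδ
    rw [pow_succ, mul_comm _ 2, mul_assoc] at hsS
    obtain ⟨T, hTS, hTcard, hcover⟩ := exists_isPacking_forall_exists_dist_le hδ₀.le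
      (card_le_of_isPacking_closedBall hδ₀ (inter_subset_right (s := A)))
    have hT : (T.card : ℝ) ≤ M := hTcard ▸ hM δ hδ y hy
    have hfiber (t) (ht : t ∈ T) : ((s.filter fun p => dist p t ≤ δ).card : ℝ) ≤ M ^ k := by
      refine ih (hTS ht).1 (fun p hp => ?_) (hs.subset (Finset.filter_subset _ _))
      obtain ⟨hps, hpt⟩ := Finset.mem_filter.mp hp
      exact ⟨(hsS hps).1, hpt⟩
    have hM₀ : 0 ≤ M := (Nat.cast_nonneg _).trans hT
    calc (s.card : ℝ)
        ≤ T.card * M ^ k :=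
          card_le_card_mul_of_forall_exists_dist_le (fun p hp => hcover p (hsS hp)) hfiber
      _ ≤ M * M ^ k := by gcongr
      _ = M ^ (k + 1) := (pow_succ' M k).symm

end FiniteDimensional

end Packing

open Packing in
theorem statement18 {d : ℕ} (A : Set (EuclideanSpace ℝ (Fin d)))
    (x : EuclideanSpace ℝ (Fin d)) (hx : x ∈ A)
    (ε γ : ℝ) (hε : 0 < ε) (hεγ : ε ≤ γ) :
    Real.log (packNum (A ∩ closedBall x (2 * γ)) (closedBall 0 ε)) ≤
      (⌈Real.logb 2 (2 * γ / ε)⌉₊ : ℝ) *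
        Real.log (⨆ δ : {δ : ℝ // ε ≤ δ}, ⨆ y : A,
          ((packNum (A ∩ closedBall (y : EuclideanSpace ℝ (Fin d)) (2 * δ.1))
            (closedBall 0 δ.1) : ℕ) : ℝ)) := by
  change _ ≤ _ * Real.log (localPackNum A ε)
  set K := ⌈Real.logb 2 (2 * γ / ε)⌉₊
  have hK : 1 ≤ K :=
    Nat.one_le_ceil_iff.mpr (Real.logb_pos one_lt_two (by rw [lt_div_iff₀ hε]; linarith))
  have hradius : 2 * γ ≤ 2 ^ K * ε :=
    (div_le_iff₀ hε).mp (le_two_pow_natCeil_logb (by have := hε.trans_le hεγ; positivity))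
  have hloc : 1 ≤ localPackNum A ε := one_le_localPackNum hε hx
  have hpack : (packNum (A ∩ closedBall x (2 * γ)) (closedBall 0 ε) : ℝ) ≤
      localPackNum A ε ^ K :=
    packNum_le (by positivity) fun s hsS hs =>
      card_le_pow_of_isPacking hε (fun _ hδ _ hy => packNum_le_localPackNum A hε hδ hy) hK hx
        (hsS.trans (inter_subset_inter_right _ (closedBall_subset_closedBall hradius))) hs
  rcases (packNum (A ∩ closedBall x (2 * γ)) (closedBall 0 ε)).eq_zero_or_pos with h0 | hpos
  · rw [h0, Nat.cast_zero, Real.log_zero]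
    exact mul_nonneg K.cast_nonneg (Real.log_nonneg hloc)
  · rw [← Real.log_pow]
    exact Real.log_le_log (Nat.cast_pos.mpr hpos) hpack
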